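/- arXiv:1807.11467 — 5 statements merged into one kernel-verified Lean document; each statement's English description precedes it below -/
import Mathlib

section
/- Equivalent characterization of the admissible state set (Lemma 2.1): for every state U = (ρ, m, B, E), the following are equivalent: (i) ρ > 0 and 𝓔(U) = E − (|m|²/ρ + |B|²)/2 > 0; (ii) ρ > 0 and, for all v*, B* ∈ ℝ³, U·n* + |B*|²/2 > 0. In other words, 𝒢 = 𝒢*. -/
noncomputable section

open Finset

/-- An MHD state `U = (ρ, m, B, E)` viewed as a vector in `ℝ⁸`. -/
abbrev MHDState := Fin 8 → ℝ

namespace MHD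

/-- Build a state from density, momentum, magnetic field, total energy. -/
def mk (ρ : ℝ) (m B : Fin 3 → ℝ) (E : ℝ) : MHDState :=
  ![ρ, m 0, m 1, m 2, B 0, B 1, B 2, E]

/-- Density component. -/
def dens (U : MHDState) : ℝ := U 0

/-- Momentum components. -/
def mom (U : MHDState) : Fin 3 → ℝ := ![U 1, U 2, U 3]

/-- Magnetic field components. -/
def magB (U : MHDState) : Fin 3 → ℝ := ![U 4, U 5, U 6]

/-- Total energy component. -/
def toten (U : MHDState) : ℝ := U 7

/-- Euclidean dot product on `ℝ³`. -/
def dot3 (a b : Fin 3 → ℝ) : ℝ := ∑ k, a k * b k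

/-- Squared Euclidean norm on `ℝ³`. -/
def sq3 (a : Fin 3 → ℝ) : ℝ := dot3 a a

/-- Euclidean norm on `ℝ³`. -/
def norm3 (a : Fin 3 → ℝ) : ℝ := Real.sqrt (sq3 a)

/-- Velocity `v = m / ρ`. -/
def vel (U : MHDState) : Fin 3 → ℝ := fun k => mom U k / dens U

/-- Internal energy `𝓔(U) = E − (|m|²/ρ + |B|²)/2`. -/
def intE (U : MHDState) : ℝ := toten U - (sq3 (mom U) / dens U + sq3 (magB U)) / 2

/-- Specific internal energy `e = 𝓔(U)/ρ`. -/
def specE (U : MHDState) : ℝ := intE U / dens U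

/-- The admissible state set `𝒢`. -/
def Gset : Set MHDState := {U | 0 < dens U ∧ 0 < intE U}

/-- The set `𝒢_ρ` of states with positive density. -/
def Grho : Set MHDState := {U | 0 < dens U}

/-- Euclidean dot product on `ℝ⁸`. -/
def dot8 (U V : MHDState) : ℝ := ∑ i, U i * V i

/-- The vector `n* = (|v*|²/2, −v*, −B*, 1)`. -/
def nstar (vs Bs : Fin 3 → ℝ) : MHDState :=
  mk (sq3 vs / 2) (fun k => -vs k) (fun k => -Bs k) 1

/-- The set `𝒢*`. -/
def GstarSet : Set MHDState :=
  {U | 0 < dens U ∧ ∀ vs Bs : Fin 3 → ℝ, 0 < dot8 U (nstar vs Bs) + sq3 Bs / 2}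

/-- Equation of state assumption: for `ρ > 0`, `e > 0 ↔ p(ρ,e) > 0`. -/
def IsEOS (pfun : ℝ → ℝ → ℝ) : Prop :=
  ∀ ρ e : ℝ, 0 < ρ → (0 < e ↔ 0 < pfun ρ e)

/-- Pressure of a state, via the equation of state. -/
def pres (pfun : ℝ → ℝ → ℝ) (U : MHDState) : ℝ := pfun (dens U) (specE U)

/-- Total pressure `p + |B|²/2`. -/
def ptot (pfun : ℝ → ℝ → ℝ) (U : MHDState) : ℝ := pres pfun U + sq3 (magB U) / 2

/-- The `i`-th flux `F_i(U)`. -/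
def flux (pfun : ℝ → ℝ → ℝ) (i : Fin 3) (U : MHDState) : MHDState :=
  mk (dens U * vel U i)
    (fun k => dens U * vel U i * vel U k - magB U i * magB U k
      + ptot pfun U * (if k = i then 1 else 0))
    (fun k => vel U i * magB U k - magB U i * vel U k)
    (vel U i * (toten U + ptot pfun U) - magB U i * dot3 (vel U) (magB U))

/-- Directional inner product `⟨ξ, w⟩ = Σ_{k<d} ξ_k w_k` for `ξ ∈ ℝ^d`, `w ∈ ℝ³`, `d ≤ 3`. -/
def dirDot {d : ℕ} (hd : d ≤ 3) (ξ : Fin d → ℝ) (w : Fin 3 → ℝ) : ℝ :=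
  ∑ k, ξ k * w (Fin.castLE hd k)

/-- Directional flux `⟨ξ, F(U)⟩ = Σ_{i<d} ξ_i F_i(U)`. -/
def dirFlux (pfun : ℝ → ℝ → ℝ) {d : ℕ} (hd : d ≤ 3) (ξ : Fin d → ℝ) (U : MHDState) :
    MHDState :=
  ∑ i, ξ i • flux pfun (Fin.castLE hd i) U

/-- `ξ` is a unit vector. -/
def unitVec {d : ℕ} (ξ : Fin d → ℝ) : Prop := (∑ k, (ξ k) ^ 2) = 1

/-- `𝒞_s(U) = p / (ρ √(2e))`. -/
def soundC (pfun : ℝ → ℝ → ℝ) (U : MHDState) : ℝ :=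
  pres pfun U / (dens U * Real.sqrt (2 * specE U))

/-- `𝒞(U; ξ)`. -/
def waveC (pfun : ℝ → ℝ → ℝ) {d : ℕ} (hd : d ≤ 3) (ξ : Fin d → ℝ) (U : MHDState) : ℝ :=
  Real.sqrt ((soundC pfun U ^ 2 + sq3 (magB U) / dens U
    + Real.sqrt ((soundC pfun U ^ 2 + sq3 (magB U) / dens U) ^ 2
      - 4 * soundC pfun U ^ 2 * dirDot hd ξ (magB U) ^ 2 / dens U)) / 2)

/-- Roe-type averaged velocity `v̄ = (√ρ v + √ρ̃ ṽ)/(√ρ + √ρ̃)`. -/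
def roeV (U Ut : MHDState) : Fin 3 → ℝ := fun k =>
  (Real.sqrt (dens U) * vel U k + Real.sqrt (dens Ut) * vel Ut k)
    / (Real.sqrt (dens U) + Real.sqrt (dens Ut))

/-- `α_r(U, Ũ; ξ)`. -/
def alphaR (pfun : ℝ → ℝ → ℝ) {d : ℕ} (hd : d ≤ 3) (ξ : Fin d → ℝ) (U Ut : MHDState) : ℝ :=
  max (dirDot hd ξ (vel U)) (dirDot hd ξ (roeV U Ut)) + waveC pfun hd ξ U
    + norm3 (magB U - magB Ut) / (Real.sqrt (dens U) + Real.sqrt (dens Ut))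

/-- `α_l(U, Ũ; ξ)`. -/
def alphaL (pfun : ℝ → ℝ → ℝ) {d : ℕ} (hd : d ≤ 3) (ξ : Fin d → ℝ) (U Ut : MHDState) : ℝ :=
  min (dirDot hd ξ (vel U)) (dirDot hd ξ (roeV U Ut)) - waveC pfun hd ξ U
    - norm3 (magB U - magB Ut) / (Real.sqrt (dens U) + Real.sqrt (dens Ut))

/-- `α_⋆(U, Ũ; ξ)`. -/
def alphaS (pfun : ℝ → ℝ → ℝ) {d : ℕ} (hd : d ≤ 3) (ξ : Fin d → ℝ) (U Ut : MHDState) : ℝ :=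
  max (|dirDot hd ξ (vel U)|) (|dirDot hd ξ (roeV U Ut)|) + waveC pfun hd ξ U
    + norm3 (magB U - magB Ut) / (Real.sqrt (dens U) + Real.sqrt (dens Ut))

/-- The vector `θ(U, v*, B*) = 2^{−1/2}(B − B*, √ρ(v − v*), √(2ρe)) ∈ ℝ⁷`. -/
def theta (U : MHDState) (vs Bs : Fin 3 → ℝ) : Fin 7 → ℝ :=
  ![(magB U 0 - Bs 0) / Real.sqrt 2,
    (magB U 1 - Bs 1) / Real.sqrt 2,
    (magB U 2 - Bs 2) / Real.sqrt 2,
    Real.sqrt (dens U) * (vel U 0 - vs 0) / Real.sqrt 2,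
    Real.sqrt (dens U) * (vel U 1 - vs 1) / Real.sqrt 2,
    Real.sqrt (dens U) * (vel U 2 - vs 2) / Real.sqrt 2,
    Real.sqrt (2 * intE U) / Real.sqrt 2]

/-- `|θ|²`. -/
def thetaSq (U : MHDState) (vs Bs : Fin 3 → ℝ) : ℝ := ∑ k, theta U vs Bs k ^ 2

/-- Godunov–Powell source vector `S(U) = (0, B, v, v·B)`. -/
def source (U : MHDState) : MHDState := mk 0 (magB U) (vel U) (dot3 (vel U) (magB U))

/-- HLL numerical flux with clamped wave speeds `σm ≤ 0 ≤ σp`. -/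
def hllFlux (pfun : ℝ → ℝ → ℝ) {d : ℕ} (hd : d ≤ 3) (ξ : Fin d → ℝ)
    (Um Up : MHDState) (σm σp : ℝ) : MHDState :=
  (σp - σm)⁻¹ • (σp • dirFlux pfun hd ξ Um - σm • dirFlux pfun hd ξ Up
    + (σm * σp) • (Up - Um))

/-- HLL intermediate state `H(U⁻, U⁺; ξ)`. -/
def hllMid (pfun : ℝ → ℝ → ℝ) {d : ℕ} (hd : d ≤ 3) (ξ : Fin d → ℝ)
    (Um Up : MHDState) (σm σp : ℝ) : MHDState :=
  (σp - σm)⁻¹ • (σp • Up - dirFlux pfun hd ξ Up - σm • Um + dirFlux pfun hd ξ Um)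

/-- The quantity `α̂_j` of Theorem 2.3. -/
def alphaHat (pfun : ℝ → ℝ → ℝ) {d : ℕ} (hd : d ≤ 3) {N : ℕ}
    (s : Fin N → ℝ) (ξ : Fin N → Fin d → ℝ) (U : Fin N → MHDState) (j : Fin N) : ℝ :=
  max (dirDot hd (ξ j) (vel (U j)))
      ((∑ i, s i)⁻¹ * ∑ i, s i * dirDot hd (fun k => ξ j k - ξ i k) (roeV (U j) (U i)))
  + waveC pfun hd (ξ j) (U j)
  + 2 * (∑ i, s i)⁻¹ * ∑ i, s i *
      (norm3 (magB (U j) - magB (U i)) / (Real.sqrt (dens (U j)) + Real.sqrt (dens (U i))))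

def d1le3 : (1 : ℕ) ≤ 3 := by omega
def d2le3 : (2 : ℕ) ≤ 3 := by omega

/-- In one dimension the direction `ξ = 1`. -/
def xi1 : Fin 1 → ℝ := fun _ => 1

/-! For `ρ > 0`, completing the square in `v*` and in `B*` gives
`U·n* + |B*|²/2 = 𝓔(U) + ρ|v − v*|²/2 + |B − B*|²/2`.
The right-hand side is at least `𝓔(U)`, with equality at `(v*, B*) = (v, B)`, so `𝓔(U)` is the
minimum over all `(v*, B*)` of the left-hand side. -/

lemma sq3_nonneg (a : Fin 3 → ℝ) : 0 ≤ sq3 a :=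
  Finset.sum_nonneg (s := univ) fun k _ => mul_self_nonneg (a k)

@[simp]
lemma sq3_zero : sq3 0 = 0 := by
  simp [sq3, dot3]

lemma dot8_nstar_add_sq3_eq (U : MHDState) (vs Bs : Fin 3 → ℝ) (hρ : dens U ≠ 0) :
    dot8 U (nstar vs Bs) + sq3 Bs / 2 =
      intE U + dens U * sq3 (vel U - vs) / 2 + sq3 (magB U - Bs) / 2 := by
  simp only [dens] at hρ
  simp only [dot8, nstar, mk, intE, sq3, dot3, vel, mom, magB, dens, toten, Pi.sub_apply,
    Fin.sum_univ_succ, Fin.sum_univ_zero, Fin.succ_zero_eq_one, Fin.succ_one_eq_two,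
    Fin.reduceSucc, Matrix.cons_val_zero, Matrix.cons_val_one, Matrix.cons_val]
  field_simp
  ring

lemma intE_le_dot8_nstar_add_sq3 (U : MHDState) (vs Bs : Fin 3 → ℝ) (hρ : 0 < dens U) :
    intE U ≤ dot8 U (nstar vs Bs) + sq3 Bs / 2 := by
  rw [dot8_nstar_add_sq3_eq U vs Bs hρ.ne']
  have hkin := mul_nonneg hρ.le (sq3_nonneg (vel U - vs))
  linarith [sq3_nonneg (magB U - Bs)]

lemma dot8_nstar_vel_magB_add_sq3 (U : MHDState) (hρ : dens U ≠ 0) :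
    dot8 U (nstar (vel U) (magB U)) + sq3 (magB U) / 2 = intE U := by
  simp [dot8_nstar_add_sq3_eq U _ _ hρ]

/-- Lemma 2.1: the admissible set `𝒢` coincides with `𝒢*`:
for every state `U`, `ρ > 0 ∧ 𝓔(U) > 0` iff `ρ > 0` and
`U·n* + |B*|²/2 > 0` for all `v*, B* ∈ ℝ³`. -/
theorem Gset_eq_GstarSet (U : MHDState) :
    (0 < dens U ∧ 0 < intE U) ↔
      (0 < dens U ∧ ∀ vs Bs : Fin 3 → ℝ, 0 < dot8 U (nstar vs Bs) + sq3 Bs / 2) := by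
  refine and_congr_right fun hρ => ⟨fun hE vs Bs => ?_, fun h => ?_⟩
  · exact hE.trans_le (intE_le_dot8_nstar_add_sq3 U vs Bs hρ)
  · simpa only [dot8_nstar_vel_magB_add_sq3 U hρ.ne'] using h (vel U) (magB U)

end MHD
end
end

section
/- Coordinate-direction flux estimate (Lemma 2.7): for every U ∈ 𝒢, all v*, B* ∈ ℝ³ and each i ∈ {1,2,3}, writing θ = θ(U, v*, B*) with components θ₁,…,θ₇, one has F_i(U)·n* − B_i(v*·B*) ≤ v_i·Σ_{k=4}^{7} θ_k² + v*_i·(|B|²/2 − B·B*) + 𝒞(U; 𝐞_i)·|θ|², where 𝒞(U; 𝐞_i) is evaluated with d = 3 and ξ = 𝐞_i, the i-th standard basis vector of ℝ³. -/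
noncomputable section

open Finset

namespace MHD

private lemma mhd_cauchy2 (a b c d : ℝ) :
    |a*c + b*d| ≤ Real.sqrt (a^2+b^2) * Real.sqrt (c^2+d^2) := by
  have h : (a*c+b*d)^2 ≤ (a^2+b^2)*(c^2+d^2) := by nlinarith [sq_nonneg (a*d-b*c)]
  rw [← Real.sqrt_mul (by positivity)]
  rw [show |a*c+b*d| = Real.sqrt ((a*c+b*d)^2) by rw [Real.sqrt_sq_eq_abs]]
  exact Real.sqrt_le_sqrt h

private lemma mhd_core4 (C cs β γ x y c z : ℝ)
    (hy : 0 ≤ y) (hc : 0 ≤ c) (hz : 0 ≤ z)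
    (hcs : 0 < cs) (hγ : 0 ≤ γ) (hC : 0 < C)
    (hquart : C^4 - (cs^2+β^2+γ^2)*C^2 + cs^2*γ^2 = 0)
    (hhalf : (cs^2+β^2+γ^2)/2 ≤ C^2) :
    2*(cs*x*y + β*x*c + γ*c*z) ≤ C*(x^2+y^2+c^2+z^2) := by
  have hprod : (C^2-cs^2)*(C^2-β^2-γ^2) = cs^2*β^2 := by linear_combination hquart
  have hsum : 0 ≤ (C^2-cs^2) + (C^2-β^2-γ^2) := by linarith
  have hs1 : 0 ≤ C^2 - cs^2 := by nlinarith [sq_nonneg (cs*β)]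
  have hs2 : 0 ≤ C^2 - β^2 - γ^2 := by nlinarith [sq_nonneg (cs*β)]
  rcases eq_or_lt_of_le hs1 with hμ | hμ
  · have h0 : cs^2*β^2 = 0 := by linear_combination -hprod - (C^2-β^2-γ^2)*hμ
    have hb2 : β^2 = 0 := by nlinarith [sq_nonneg β, mul_pos hcs hcs]
    have hβ0 : β = 0 := pow_eq_zero_iff (by norm_num) |>.1 hb2
    have hfac : (cs-C)*(cs+C) = 0 := by linear_combination hμ
    have hcsC : cs = C := by
      rcases mul_eq_zero.1 hfac with h|h
      · linarith
      · linarith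
    have hγC : γ ≤ C := by
      have hgC : 0 < γ + C := by linarith
      nlinarith [hs2, hgC]
    subst hβ0; subst hcsC
    nlinarith [mul_nonneg hcs.le (sq_nonneg (x-y)), mul_nonneg hcs.le (sq_nonneg (c-z)),
      mul_nonneg (mul_nonneg (sub_nonneg.2 hγC) hc) hz]
  · have key : (C^2-cs^2)*C*(C*(x^2+y^2+c^2+z^2) - 2*(cs*x*y+β*x*c+γ*c*z))
        = (C^2-cs^2)*(C*y-cs*x)^2 + ((C^2-cs^2)*x - C*β*c)^2
          + (C^2-cs^2)*(γ*c-C*z)^2 + (C^4-(cs^2+β^2+γ^2)*C^2+cs^2*γ^2)*c^2 := by ring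
    have hGnn : 0 ≤ (C^2-cs^2)*C*(C*(x^2+y^2+c^2+z^2) - 2*(cs*x*y+β*x*c+γ*c*z)) := by
      rw [key, hquart]
      have t1 : 0 ≤ (C^2-cs^2)*(C*y-cs*x)^2 := mul_nonneg hs1 (sq_nonneg _)
      have t2 : 0 ≤ ((C^2-cs^2)*x - C*β*c)^2 := sq_nonneg _
      have t3 : 0 ≤ (C^2-cs^2)*(γ*c-C*z)^2 := mul_nonneg hs1 (sq_nonneg _)
      linarith
    have hpos : 0 < (C^2-cs^2)*C := mul_pos (by linarith) hC
    by_contra hcon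
    push_neg at hcon
    have := mul_pos hpos (by linarith : (0:ℝ) < 2*(cs*x*y+β*x*c+γ*c*z) - C*(x^2+y^2+c^2+z^2))
    linarith [hGnn, this]

private lemma mhd_innerlem (cs β γ : ℝ) : 0 ≤ (cs^2+β^2+γ^2)^2 - 4*cs^2*γ^2 := by
  nlinarith [sq_nonneg (cs^2+β^2-γ^2), mul_nonneg (sq_nonneg β) (sq_nonneg γ)]

private lemma mhd_arglem (cs β γ s : ℝ) (hcs : 0 < cs) (hs : 0 ≤ s) :
    0 < (cs^2+β^2+γ^2+s)/2 := by nlinarith [sq_nonneg β, sq_nonneg γ, mul_pos hcs hcs]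

private lemma mhd_physkey (ρ ie p b1 b2 b3 w1 w2 w3 c1 c2 c3 : ℝ)
    (hρ : 0 < ρ) (hie : 0 < ie) (hp : 0 < p) :
    w1*p + w1*(b1*c1+b2*c2+b3*c3) - b1*(w1*c1+w2*c2+w3*c3) ≤
      Real.sqrt ((p^2/(2*ρ*ie) + (b1^2+b2^2+b3^2)/ρ
        + Real.sqrt ((p^2/(2*ρ*ie) + (b1^2+b2^2+b3^2)/ρ)^2 - 4*(p^2/(2*ρ*ie))*b1^2/ρ))/2)
      * ((c1^2+c2^2+c3^2)/2 + ρ*(w1^2+w2^2+w3^2)/2 + ie) := by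
  have hr0 : 0 < Real.sqrt ρ := Real.sqrt_pos.2 hρ
  set r := Real.sqrt ρ with hr_def
  have hr2 : r^2 = ρ := Real.sq_sqrt hρ.le
  have hy0 : 0 < Real.sqrt (2*ie) := Real.sqrt_pos.2 (by linarith)
  set y := Real.sqrt (2*ie) with hy_def
  have hy2 : y^2 = 2*ie := Real.sq_sqrt (by linarith)
  set cs := p/(r*y) with hcs_def
  have hcs0 : 0 < cs := div_pos hp (mul_pos hr0 hy0)
  have hcs2 : cs^2 = p^2/(2*ρ*ie) := by
    rw [hcs_def, div_pow, mul_pow, hr2, hy2, show ρ*(2*ie) = 2*ρ*ie by ring]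
  set β := Real.sqrt (b2^2+b3^2)/r with hβ_def
  have hβ0 : 0 ≤ β := by positivity
  have hβ2 : β^2 = (b2^2+b3^2)/ρ := by
    rw [hβ_def, div_pow, Real.sq_sqrt (by positivity), hr2]
  set γ := |b1|/r with hγ_def
  have hγ0 : 0 ≤ γ := by positivity
  have hγ2 : γ^2 = b1^2/ρ := by rw [hγ_def, div_pow, sq_abs, hr2]
  rw [show p^2/(2*ρ*ie) + (b1^2+b2^2+b3^2)/ρ = cs^2+β^2+γ^2 by
    rw [hcs2, hβ2, hγ2]; ring]
  rw [show 4*(p^2/(2*ρ*ie))*b1^2/ρ = 4*cs^2*γ^2 by rw [hcs2, hγ2]; ring]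
  have hinner : 0 ≤ (cs^2+β^2+γ^2)^2 - 4*cs^2*γ^2 := mhd_innerlem cs β γ
  set s := Real.sqrt ((cs^2+β^2+γ^2)^2 - 4*cs^2*γ^2) with hs_def
  have hs2 : s^2 = (cs^2+β^2+γ^2)^2 - 4*cs^2*γ^2 := Real.sq_sqrt hinner
  have hsnn : 0 ≤ s := Real.sqrt_nonneg _
  have harg : 0 < (cs^2+β^2+γ^2+s)/2 := mhd_arglem cs β γ s hcs0 hsnn
  set C := Real.sqrt ((cs^2+β^2+γ^2+s)/2) with hC_def
  have hC2 : C^2 = (cs^2+β^2+γ^2+s)/2 := Real.sq_sqrt harg.le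
  have hCpos : 0 < C := Real.sqrt_pos.2 harg
  have hquart : C^4 - (cs^2+β^2+γ^2)*C^2 + cs^2*γ^2 = 0 := by
    linear_combination (C^2-(cs^2+β^2+γ^2-s)/2)*hC2 + (1/4)*hs2
  have hhalf : (cs^2+β^2+γ^2)/2 ≤ C^2 := by linarith
  set cc := Real.sqrt (c2^2+c3^2) with hcc_def
  have hcc0 : 0 ≤ cc := Real.sqrt_nonneg _
  have hcc2 : cc^2 = c2^2+c3^2 := Real.sq_sqrt (by positivity)
  set zz := r*Real.sqrt (w2^2+w3^2) with hzz_def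
  have hzz0 : 0 ≤ zz := by positivity
  have hzz2 : zz^2 = ρ*(w2^2+w3^2) := by
    rw [hzz_def, mul_pow, hr2, Real.sq_sqrt (by positivity)]
  have main := mhd_core4 C cs β γ (r*|w1|) y cc zz
    hy0.le hcc0 hzz0 hcs0 hγ0 hCpos hquart hhalf
  have hXs : (r*|w1|)^2 = ρ*w1^2 := by rw [mul_pow, hr2, sq_abs]
  have hrny : r*y ≠ 0 := (mul_pos hr0 hy0).ne'
  have i1 : w1*p ≤ cs*(r*|w1|)*y := by
    have e1 : cs*(r*|w1|)*y = p * |w1| := by rw [hcs_def]; field_simp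
    rw [e1]
    calc w1*p ≤ |w1| * p := mul_le_mul_of_nonneg_right (le_abs_self w1) hp.le
      _ = p * |w1| := mul_comm _ _
  have i2 : w1*(b2*c2+b3*c3) ≤ β*(r*|w1|)*cc := by
    have e2 : β*(r*|w1|)*cc = |w1| * (Real.sqrt (b2^2+b3^2)*cc) := by
      rw [hβ_def]; field_simp
    rw [e2]
    calc w1*(b2*c2+b3*c3) ≤ |w1*(b2*c2+b3*c3)| := le_abs_self _
      _ = |w1| * |b2*c2+b3*c3| := abs_mul _ _
      _ ≤ |w1| * (Real.sqrt (b2^2+b3^2)*cc) := by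
          exact mul_le_mul_of_nonneg_left (mhd_cauchy2 b2 b3 c2 c3) (abs_nonneg w1)
  have i3 : -(b1*(w2*c2+w3*c3)) ≤ γ*cc*zz := by
    have e3 : γ*cc*zz = |b1| * (Real.sqrt (w2^2+w3^2)*cc) := by
      rw [hγ_def, hzz_def]; field_simp
    rw [e3]
    calc -(b1*(w2*c2+w3*c3)) ≤ |b1*(w2*c2+w3*c3)| := neg_le_abs _
      _ = |b1| * |w2*c2+w3*c3| := abs_mul _ _
      _ ≤ |b1| * (Real.sqrt (w2^2+w3^2)*cc) := by
          exact mul_le_mul_of_nonneg_left (mhd_cauchy2 w2 w3 c2 c3) (abs_nonneg b1)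
  have hfin : 0 ≤ C*c1^2 := mul_nonneg hCpos.le (sq_nonneg c1)
  calc w1*p + w1*(b1*c1+b2*c2+b3*c3) - b1*(w1*c1+w2*c2+w3*c3)
      = w1*p + w1*(b2*c2+b3*c3) + (-(b1*(w2*c2+w3*c3))) := by ring
    _ ≤ cs*(r*|w1|)*y + β*(r*|w1|)*cc + γ*cc*zz := by linarith
    _ ≤ C*((r*|w1|)^2 + y^2 + cc^2 + zz^2)/2 := by linarith
    _ = C*(ρ*w1^2 + 2*ie + (c2^2+c3^2) + ρ*(w2^2+w3^2))/2 := by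
        rw [hXs, hy2, hcc2, hzz2]
    _ ≤ C*((c1^2+c2^2+c3^2)/2 + ρ*(w1^2+w2^2+w3^2)/2 + ie) := by linarith [hfin]

private lemma vec8at5 (a0 a1 a2 a3 a4 a5 a6 a7 : ℝ) :
    ![a0,a1,a2,a3,a4,a5,a6,a7] 5 = a5 := rfl
private lemma vec8at6 (a0 a1 a2 a3 a4 a5 a6 a7 : ℝ) :
    ![a0,a1,a2,a3,a4,a5,a6,a7] 6 = a6 := rfl
private lemma vec8at7 (a0 a1 a2 a3 a4 a5 a6 a7 : ℝ) :
    ![a0,a1,a2,a3,a4,a5,a6,a7] 7 = a7 := rfl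

/-- Lemma 2.7 (coordinate-direction flux estimate). -/
theorem coord_flux_estimate (pfun : ℝ → ℝ → ℝ) (hEOS : IsEOS pfun)
    (U : MHDState) (hU : U ∈ Gset) (vs Bs : Fin 3 → ℝ) (i : Fin 3) :
    dot8 (flux pfun i U) (nstar vs Bs) - magB U i * dot3 vs Bs ≤
      vel U i * (theta U vs Bs 3 ^ 2 + theta U vs Bs 4 ^ 2
          + theta U vs Bs 5 ^ 2 + theta U vs Bs 6 ^ 2)
        + vs i * (sq3 (magB U) / 2 - dot3 (magB U) Bs)
        + waveC pfun (le_refl 3) (fun k : Fin 3 => if k = i then 1 else 0) U *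
            thetaSq U vs Bs := by
  obtain ⟨hρ, hie0⟩ := hU
  have hρ' : (0:ℝ) < U 0 := hρ
  have hsp : 0 < specE U := div_pos hie0 hρ
  have hp0 : 0 < pres pfun U := (hEOS _ _ hρ).1 hsp
  set p := pres pfun U with hp_def
  set ie := intE U with hie_def
  have hie : 0 < ie := hie0
  have hsc : soundC pfun U ^ 2 = p^2/(2*U 0*ie) := by
    rw [hp_def, hie_def]
    have hsp' : (0:ℝ) < intE U / U 0 := hsp
    simp only [soundC, specE, dens]
    rw [div_pow, mul_pow, Real.sq_sqrt (by positivity)]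
    field_simp
  have hθ3 : theta U vs Bs 3 ^ 2 = U 0*(U 1/U 0 - vs 0)^2/2 := by
    show (Real.sqrt (dens U) * (vel U 0 - vs 0) / Real.sqrt 2)^2 = _
    rw [div_pow, mul_pow, Real.sq_sqrt hρ.le, Real.sq_sqrt (by norm_num : (0:ℝ) ≤ 2)]
    rfl
  have hθ4 : theta U vs Bs 4 ^ 2 = U 0*(U 2/U 0 - vs 1)^2/2 := by
    show (Real.sqrt (dens U) * (vel U 1 - vs 1) / Real.sqrt 2)^2 = _
    rw [div_pow, mul_pow, Real.sq_sqrt hρ.le, Real.sq_sqrt (by norm_num : (0:ℝ) ≤ 2)]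
    rfl
  have hθ5 : theta U vs Bs 5 ^ 2 = U 0*(U 3/U 0 - vs 2)^2/2 := by
    show (Real.sqrt (dens U) * (vel U 2 - vs 2) / Real.sqrt 2)^2 = _
    rw [div_pow, mul_pow, Real.sq_sqrt hρ.le, Real.sq_sqrt (by norm_num : (0:ℝ) ≤ 2)]
    rfl
  have hθ6 : theta U vs Bs 6 ^ 2 = ie := by
    show (Real.sqrt (2 * intE U) / Real.sqrt 2)^2 = _
    rw [div_pow, Real.sq_sqrt (by linarith : (0:ℝ) ≤ 2*intE U),
      Real.sq_sqrt (by norm_num : (0:ℝ) ≤ 2), hie_def]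
    ring
  have hθ0 : theta U vs Bs 0 ^ 2 = (U 4 - Bs 0)^2/2 := by
    show ((magB U 0 - Bs 0) / Real.sqrt 2)^2 = _
    rw [div_pow, Real.sq_sqrt (by norm_num : (0:ℝ) ≤ 2)]
    rfl
  have hθ1 : theta U vs Bs 1 ^ 2 = (U 5 - Bs 1)^2/2 := by
    show ((magB U 1 - Bs 1) / Real.sqrt 2)^2 = _
    rw [div_pow, Real.sq_sqrt (by norm_num : (0:ℝ) ≤ 2)]
    rfl
  have hθ2 : theta U vs Bs 2 ^ 2 = (U 6 - Bs 2)^2/2 := by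
    show ((magB U 2 - Bs 2) / Real.sqrt 2)^2 = _
    rw [div_pow, Real.sq_sqrt (by norm_num : (0:ℝ) ≤ 2)]
    rfl
  have hts : thetaSq U vs Bs = (U 4 - Bs 0)^2/2 + (U 5 - Bs 1)^2/2 + (U 6 - Bs 2)^2/2
      + U 0*(U 1/U 0 - vs 0)^2/2 + U 0*(U 2/U 0 - vs 1)^2/2 + U 0*(U 3/U 0 - vs 2)^2/2
      + ie := by
    rw [thetaSq, Fin.sum_univ_seven, hθ0, hθ1, hθ2, hθ3, hθ4, hθ5, hθ6]
  have h3 : i = 0 ∨ i = 1 ∨ i = 2 := by fin_cases i <;> simp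
  have hsq3e : sq3 (magB U) = U 4^2+U 5^2+U 6^2 := by
    simp [sq3, dot3, magB, Fin.sum_univ_three]; ring
  rcases h3 with rfl|rfl|rfl
  · have hdd : dirDot (le_refl 3) (fun k : Fin 3 => if k = 0 then 1 else 0) (magB U)
        = U 4 := by
      simp [dirDot, Fin.sum_univ_three, magB, Fin.castLE]
    have hwc : waveC pfun (le_refl 3) (fun k : Fin 3 => if k = 0 then 1 else 0) U
        = Real.sqrt ((p^2/(2*U 0*ie) + (U 4^2+U 5^2+U 6^2)/U 0
          + Real.sqrt ((p^2/(2*U 0*ie) + (U 4^2+U 5^2+U 6^2)/U 0)^2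
            - 4*(p^2/(2*U 0*ie))*U 4^2/U 0))/2) := by
      simp only [waveC, hsc, hdd, hsq3e, dens]
    rw [hwc, hθ3, hθ4, hθ5, hθ6, hts]
    simp only [dot8, flux, nstar, mk, dot3, sq3, vel, mom, magB, dens, toten, ptot,
      Fin.sum_univ_eight, Fin.sum_univ_three, ← hp_def,
      Matrix.cons_val_zero, Matrix.cons_val_one, Matrix.head_cons,
      Matrix.cons_val_two, Matrix.tail_cons, Matrix.cons_val_three,
      Matrix.cons_val_four, vec8at5, vec8at6, vec8at7, reduceIte, mul_one,
      (show ((1:Fin 3) = 0) = False by simp), (show ((2:Fin 3) = 0) = False by simp),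
      ite_false, mul_zero, add_zero]
    set v1 := U 1 / U 0 with hv1
    set v2 := U 2 / U 0 with hv2
    set v3 := U 3 / U 0 with hv3
    have hU7 : U 7 = ie + (U 0*(v1^2+v2^2+v3^2)+(U 4^2+U 5^2+U 6^2))/2 := by
      rw [hie_def, hv1, hv2, hv3]
      simp only [intE, sq3, dot3, mom, magB, toten, dens, Fin.sum_univ_three,
        Matrix.cons_val_zero, Matrix.cons_val_one, Matrix.head_cons,
        Matrix.cons_val_two, Matrix.tail_cons]
      field_simp
      ring
    rw [hU7]
    have hkey := mhd_physkey (U 0) ie p (U 4) (U 5) (U 6) (v1 - vs 0) (v2 - vs 1)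
      (v3 - vs 2) (U 4 - Bs 0) (U 5 - Bs 1) (U 6 - Bs 2) hρ' hie hp0
    linarith [hkey]
  · have hsq3e1 : sq3 (magB U) = U 5^2+U 4^2+U 6^2 := by
      simp [sq3, dot3, magB, Fin.sum_univ_three]; ring
    have hdd : dirDot (le_refl 3) (fun k : Fin 3 => if k = 1 then 1 else 0) (magB U)
        = U 5 := by
      simp [dirDot, Fin.sum_univ_three, magB, Fin.castLE]
    have hwc : waveC pfun (le_refl 3) (fun k : Fin 3 => if k = 1 then 1 else 0) U
        = Real.sqrt ((p^2/(2*U 0*ie) + (U 5^2+U 4^2+U 6^2)/U 0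
          + Real.sqrt ((p^2/(2*U 0*ie) + (U 5^2+U 4^2+U 6^2)/U 0)^2
            - 4*(p^2/(2*U 0*ie))*U 5^2/U 0))/2) := by
      simp only [waveC, hsc, hdd, hsq3e1, dens]
    rw [hwc, hθ3, hθ4, hθ5, hθ6, hts]
    simp only [dot8, flux, nstar, mk, dot3, sq3, vel, mom, magB, dens, toten, ptot,
      Fin.sum_univ_eight, Fin.sum_univ_three, ← hp_def,
      Matrix.cons_val_zero, Matrix.cons_val_one, Matrix.head_cons,
      Matrix.cons_val_two, Matrix.tail_cons, Matrix.cons_val_three,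
      Matrix.cons_val_four, vec8at5, vec8at6, vec8at7, reduceIte, mul_one,
      (show ((0:Fin 3) = 1) = False by simp), (show ((2:Fin 3) = 1) = False by simp),
      ite_false, mul_zero, add_zero]
    set v1 := U 1 / U 0 with hv1
    set v2 := U 2 / U 0 with hv2
    set v3 := U 3 / U 0 with hv3
    have hU7 : U 7 = ie + (U 0*(v1^2+v2^2+v3^2)+(U 4^2+U 5^2+U 6^2))/2 := by
      rw [hie_def, hv1, hv2, hv3]
      simp only [intE, sq3, dot3, mom, magB, toten, dens, Fin.sum_univ_three,
        Matrix.cons_val_zero, Matrix.cons_val_one, Matrix.head_cons,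
        Matrix.cons_val_two, Matrix.tail_cons]
      field_simp
      ring
    rw [hU7]
    have hkey := mhd_physkey (U 0) ie p (U 5) (U 4) (U 6) (v2 - vs 1) (v1 - vs 0)
      (v3 - vs 2) (U 5 - Bs 1) (U 4 - Bs 0) (U 6 - Bs 2) hρ' hie hp0
    linarith [hkey]
  · have hsq3e2 : sq3 (magB U) = U 6^2+U 4^2+U 5^2 := by
      simp [sq3, dot3, magB, Fin.sum_univ_three]; ring
    have hdd : dirDot (le_refl 3) (fun k : Fin 3 => if k = 2 then 1 else 0) (magB U)
        = U 6 := by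
      simp [dirDot, Fin.sum_univ_three, magB, Fin.castLE]
    have hwc : waveC pfun (le_refl 3) (fun k : Fin 3 => if k = 2 then 1 else 0) U
        = Real.sqrt ((p^2/(2*U 0*ie) + (U 6^2+U 4^2+U 5^2)/U 0
          + Real.sqrt ((p^2/(2*U 0*ie) + (U 6^2+U 4^2+U 5^2)/U 0)^2
            - 4*(p^2/(2*U 0*ie))*U 6^2/U 0))/2) := by
      simp only [waveC, hsc, hdd, hsq3e2, dens]
    rw [hwc, hθ3, hθ4, hθ5, hθ6, hts]
    simp only [dot8, flux, nstar, mk, dot3, sq3, vel, mom, magB, dens, toten, ptot,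
      Fin.sum_univ_eight, Fin.sum_univ_three, ← hp_def,
      Matrix.cons_val_zero, Matrix.cons_val_one, Matrix.head_cons,
      Matrix.cons_val_two, Matrix.tail_cons, Matrix.cons_val_three,
      Matrix.cons_val_four, vec8at5, vec8at6, vec8at7, reduceIte, mul_one,
      (show ((0:Fin 3) = 2) = False by simp), (show ((1:Fin 3) = 2) = False by simp),
      ite_false, mul_zero, add_zero]
    set v1 := U 1 / U 0 with hv1
    set v2 := U 2 / U 0 with hv2
    set v3 := U 3 / U 0 with hv3
    have hU7 : U 7 = ie + (U 0*(v1^2+v2^2+v3^2)+(U 4^2+U 5^2+U 6^2))/2 := by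
      rw [hie_def, hv1, hv2, hv3]
      simp only [intE, sq3, dot3, mom, magB, toten, dens, Fin.sum_univ_three,
        Matrix.cons_val_zero, Matrix.cons_val_one, Matrix.head_cons,
        Matrix.cons_val_two, Matrix.tail_cons]
      field_simp
      ring
    rw [hU7]
    have hkey := mhd_physkey (U 0) ie p (U 6) (U 4) (U 5) (v3 - vs 2) (v1 - vs 0)
      (v2 - vs 1) (U 6 - Bs 2) (U 4 - Bs 0) (U 5 - Bs 1) hρ' hie hp0
    linarith [hkey]
end MHD
end
end

section
/- Directional flux estimate (Lemma 2.8): for every U ∈ 𝒢, all v*, B* ∈ ℝ³, each d ∈ {1,2,3} and every unit vector ξ ∈ ℝ^d, writing θ = θ(U, v*, B*), one has ⟨ξ, F(U)⟩·n* − ⟨ξ, B⟩·(v*·B*) ≤ ⟨ξ, v⟩·Σ_{k=4}^{7} θ_k² + ⟨ξ, v*⟩·(|B|²/2 − B·B*) + 𝒞(U; ξ)·|θ|². -/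
noncomputable section

open Finset

/-!
Removing from `⟨ξ, F(U)⟩·n* − ⟨ξ, B⟩(v*·B*)` the two terms that appear verbatim on the right
leaves the cross terms `⟨ξ, v − v*⟩ (p + B·(B − B*)) − ⟨ξ, B⟩ (B − B*)·(v − v*)`, a quadratic form
in `θ`. With `p = 𝒞_s √(2ρe) √ρ`, `b = B/√ρ` and `u = √ρ (v − v*)`, only `⟨ξ, u⟩` and the parts of
`b`, `u` orthogonal to `ξ` enter it, and Cauchy–Schwarz dominates it by a form in four scalars.
The largest eigenvalue of that form is the fast magnetosonic speed `𝒞(U; ξ)`; after multiplication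
by `2𝒞(𝒞² − 𝒞_s²)` the bound is an explicit sum of squares.
-/

open scoped RealInnerProductSpace

/-- The larger root of `X² − (a + m) X + a q`: for `a = 𝒞_s²`, `m = |b|²`, `q = ⟨ξ, b⟩²` it is the
square of the fast magnetosonic speed. -/
def fastRoot (a m q : ℝ) : ℝ := (a + m + √((a + m) ^ 2 - 4 * a * q)) / 2

section FastRoot

variable {a m q : ℝ}

lemma sq_sub_le_fastRoot_discr (ha : 0 ≤ a) (hqm : q ≤ m) :
    (a - m) ^ 2 ≤ (a + m) ^ 2 - 4 * a * q := by
  nlinarith [mul_nonneg ha (sub_nonneg.2 hqm)]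

lemma abs_sub_le_sqrt_fastRoot_discr (ha : 0 ≤ a) (hqm : q ≤ m) :
    |a - m| ≤ √((a + m) ^ 2 - 4 * a * q) := by
  rw [← Real.sqrt_sq_eq_abs]
  exact Real.sqrt_le_sqrt (sq_sub_le_fastRoot_discr ha hqm)

lemma le_fastRoot_left (ha : 0 ≤ a) (hqm : q ≤ m) : a ≤ fastRoot a m q := by
  have := abs_sub_le_sqrt_fastRoot_discr ha hqm
  unfold fastRoot
  linarith [le_abs_self (a - m)]

lemma le_fastRoot_middle (ha : 0 ≤ a) (hqm : q ≤ m) : m ≤ fastRoot a m q := by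
  have := abs_sub_le_sqrt_fastRoot_discr ha hqm
  unfold fastRoot
  linarith [neg_abs_le (a - m)]

lemma fastRoot_isRoot (ha : 0 ≤ a) (hqm : q ≤ m) :
    (fastRoot a m q - a) * (fastRoot a m q - q) = (m - q) * fastRoot a m q := by
  have h := Real.sq_sqrt ((sq_nonneg _).trans (sq_sub_le_fastRoot_discr ha hqm))
  unfold fastRoot
  linear_combination h / 4

end FastRoot

lemma mul_mul_le_of_abs_le {k f : ℝ} (hk : |k| ≤ f) (x y : ℝ) :
    k * x * y ≤ f * (x ^ 2 + y ^ 2) / 2 := by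
  have h1 : k * x * y ≤ |k| * |x * y| := by rw [mul_assoc, ← abs_mul]; exact le_abs_self _
  have h2 : |x * y| ≤ (x ^ 2 + y ^ 2) / 2 := by
    rw [abs_mul]; nlinarith [sq_nonneg (|x| - |y|), sq_abs x, sq_abs y]
  nlinarith [abs_nonneg k, abs_nonneg (x * y)]

theorem quadratic_le_sqrt_fastRoot (c p q D u w s : ℝ) :
    c * s * u + p * D * u + q * D * w ≤
      √(fastRoot (c ^ 2) (p ^ 2 + q ^ 2) (q ^ 2)) * (D ^ 2 + u ^ 2 + w ^ 2 + s ^ 2) / 2 := by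
  have hqm : q ^ 2 ≤ p ^ 2 + q ^ 2 := by nlinarith
  have hX := le_fastRoot_left (sq_nonneg c) hqm
  set f := √(fastRoot (c ^ 2) (p ^ 2 + q ^ 2) (q ^ 2))
  have hf0 : 0 ≤ f := Real.sqrt_nonneg _
  have hf2 : f ^ 2 = fastRoot (c ^ 2) (p ^ 2 + q ^ 2) (q ^ 2) :=
    Real.sq_sqrt ((sq_nonneg c).trans hX)
  have hcf : c ^ 2 ≤ f ^ 2 := hf2 ▸ hX
  have hpqf : p ^ 2 + q ^ 2 ≤ f ^ 2 := hf2 ▸ le_fastRoot_middle (sq_nonneg c) hqm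
  have hroot : (f ^ 2 - c ^ 2) * (f ^ 2 - q ^ 2) = p ^ 2 * f ^ 2 := by
    rw [hf2, fastRoot_isRoot (sq_nonneg c) hqm]; ring
  rcases hcf.eq_or_lt with hcf | hcf
  · -- degenerate case `f = |c|`, where the sum-of-squares certificate below has zero weight
    have hp : p = 0 := by
      rw [← hcf, sub_self, zero_mul] at hroot
      have : p ^ 2 * p ^ 2 ≤ p ^ 2 * c ^ 2 :=
        mul_le_mul_of_nonneg_left (by nlinarith) (sq_nonneg p)
      exact pow_eq_zero_iff two_ne_zero |>.1 (by nlinarith [sq_nonneg p])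
    have hcsu := mul_mul_le_of_abs_le (abs_le_of_sq_le_sq hcf.le hf0) s u
    have hqDw := mul_mul_le_of_abs_le (abs_le_of_sq_le_sq (a := q) (by linarith) hf0) D w
    rw [hp]
    linarith
  · have key : 2 * f * (f ^ 2 - c ^ 2) *
        (f * (D ^ 2 + u ^ 2 + w ^ 2 + s ^ 2) / 2 - (c * s * u + p * D * u + q * D * w)) =
        (f ^ 2 - c ^ 2) * (f * s - c * u) ^ 2 + (p * f * D - (f ^ 2 - c ^ 2) * u) ^ 2
          + (f ^ 2 - c ^ 2) * (q * D - f * w) ^ 2 := by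
      linear_combination D ^ 2 * hroot
    have hgap : 0 < f ^ 2 - c ^ 2 := by linarith
    have hsos : 0 ≤ 2 * f * (f ^ 2 - c ^ 2) *
        (f * (D ^ 2 + u ^ 2 + w ^ 2 + s ^ 2) / 2 - (c * s * u + p * D * u + q * D * w)) := by
      rw [key]
      exact add_nonneg (add_nonneg (mul_nonneg hgap.le (sq_nonneg _)) (sq_nonneg _))
        (mul_nonneg hgap.le (sq_nonneg _))
    have hf : 0 < f := by nlinarith
    linarith [nonneg_of_mul_nonneg_right hsos (by positivity)]

section InnerProductSpace

variable {E : Type*} [NormedAddCommGroup E] [InnerProductSpace ℝ E] {ξ : E}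

lemma norm_sub_inner_smul_sq (hξ : ‖ξ‖ = 1) (a : E) :
    ‖a - ⟪ξ, a⟫ • ξ‖ ^ 2 = ‖a‖ ^ 2 - ⟪ξ, a⟫ ^ 2 := by
  rw [norm_sub_sq_real, inner_smul_right, real_inner_comm, norm_smul, hξ, Real.norm_eq_abs,
    mul_one, sq_abs]
  ring

theorem inner_cross_le_sqrt_fastRoot (hξ : ‖ξ‖ = 1) (c s : ℝ) (b D u : E) :
    c * s * ⟪ξ, u⟫ + ⟪ξ, u⟫ * ⟪b, D⟫ - ⟪ξ, b⟫ * ⟪D, u⟫ ≤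
      √(fastRoot (c ^ 2) (‖b‖ ^ 2) (⟪ξ, b⟫ ^ 2)) * (‖D‖ ^ 2 + ‖u‖ ^ 2 + s ^ 2) / 2 := by
  set x := ⟪ξ, u⟫
  set β := ⟪ξ, b⟫
  set b' := b - β • ξ
  set u' := u - x • ξ
  have hcross : x * ⟪b, D⟫ - β * ⟪D, u⟫ = x * ⟪b', D⟫ - β * ⟪D, u'⟫ := by
    simp only [b', u', inner_sub_left, inner_sub_right, inner_smul_left, inner_smul_right,
      real_inner_comm D ξ, RCLike.conj_to_real]
    ring
  have hb : |c| * |s| * |x| + ‖b'‖ * ‖D‖ * |x| + |β| * ‖D‖ * ‖u'‖ ≤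
      √(fastRoot (c ^ 2) (‖b‖ ^ 2) (β ^ 2)) * (‖D‖ ^ 2 + ‖u‖ ^ 2 + s ^ 2) / 2 := by
    have h := quadratic_le_sqrt_fastRoot |c| ‖b'‖ |β| ‖D‖ |x| ‖u'‖ |s|
    rwa [sq_abs, sq_abs, sq_abs, sq_abs, norm_sub_inner_smul_sq hξ, norm_sub_inner_smul_sq hξ,
      sub_add_cancel, add_assoc (‖D‖ ^ 2), add_sub_cancel] at h
  have h1 : c * s * x ≤ |c| * |s| * |x| := by
    rw [← abs_mul, ← abs_mul]; exact le_abs_self _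
  have h2 : x * ⟪b', D⟫ ≤ ‖b'‖ * ‖D‖ * |x| := by
    rw [mul_comm]
    exact (le_abs_self _).trans (by rw [abs_mul]; gcongr; exact abs_real_inner_le_norm b' D)
  have h3 : -(β * ⟪D, u'⟫) ≤ |β| * ‖D‖ * ‖u'‖ := by
    rw [mul_assoc]
    exact (neg_le_abs _).trans (by rw [abs_mul]; gcongr; exact abs_real_inner_le_norm D u')
  linarith

theorem inner_cross_le_sqrt_fastRoot_div (hξ : ‖ξ‖ = 1) {ρ : ℝ} (hρ : 0 < ρ) (c s : ℝ)
    (B D v : E) :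
    ⟪ξ, v⟫ * (c * s * √ρ + ⟪B, D⟫) - ⟪ξ, B⟫ * ⟪D, v⟫ ≤
      √(fastRoot (c ^ 2) (‖B‖ ^ 2 / ρ) (⟪ξ, B⟫ ^ 2 / ρ)) *
        (‖D‖ ^ 2 + ρ * ‖v‖ ^ 2 + s ^ 2) / 2 := by
  have h := inner_cross_le_sqrt_fastRoot hξ c s ((√ρ)⁻¹ • B) D (√ρ • v)
  have hs : 0 < √ρ := Real.sqrt_pos.2 hρ
  simp only [inner_smul_left, inner_smul_right, norm_smul, RCLike.conj_to_real, mul_pow,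
    Real.norm_eq_abs, abs_of_pos hs, abs_inv, inv_mul_eq_div, div_pow, Real.sq_sqrt hρ.le] at h
  convert h using 1
  field_simp

end InnerProductSpace

namespace MHD

def padDir {d : ℕ} (hd : d ≤ 3) (ξ : Fin d → ℝ) : Fin 3 → ℝ :=
  Function.extend (Fin.castLE hd) ξ 0

lemma sum_padDir_smul {M : Type*} [AddCommMonoid M] [Module ℝ M] {d : ℕ} (hd : d ≤ 3)
    (ξ : Fin d → ℝ) (g : Fin 3 → M) :
    ∑ k, padDir hd ξ k • g k = ∑ k, ξ k • g (Fin.castLE hd k) := by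
  refine (Fintype.sum_of_injective _ (Fin.castLE_injective hd) _ _ (fun k hk => ?_)
    (fun k => ?_)).symm
  · rw [padDir, Function.extend_apply' _ _ _ hk, Pi.zero_apply, zero_smul]
  · rw [padDir, (Fin.castLE_injective hd).extend_apply]

lemma dirDot_eq_dot3_padDir {d : ℕ} (hd : d ≤ 3) (ξ : Fin d → ℝ) (w : Fin 3 → ℝ) :
    dirDot hd ξ w = dot3 (padDir hd ξ) w :=
  (sum_padDir_smul hd ξ w).symm

lemma dirFlux_eq_sum_padDir (pfun : ℝ → ℝ → ℝ) {d : ℕ} (hd : d ≤ 3) (ξ : Fin d → ℝ)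
    (U : MHDState) : dirFlux pfun hd ξ U = ∑ k, padDir hd ξ k • flux pfun k U :=
  (sum_padDir_smul hd ξ (flux pfun · U)).symm

lemma sq3_padDir {d : ℕ} (hd : d ≤ 3) (ξ : Fin d → ℝ) : sq3 (padDir hd ξ) = ∑ k, ξ k ^ 2 := by
  rw [sq3, dot3]
  simp only [← smul_eq_mul, sum_padDir_smul]
  simp only [padDir, (Fin.castLE_injective hd).extend_apply, smul_eq_mul, sq]

lemma dot3_eq_inner (a b : Fin 3 → ℝ) : dot3 a b = ⟪WithLp.toLp 2 a, WithLp.toLp 2 b⟫ := by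
  simp only [dot3, PiLp.inner_apply, RCLike.inner_apply, Real.ringHom_apply, mul_comm]

lemma sq3_eq_norm_sq (a : Fin 3 → ℝ) : sq3 a = ‖WithLp.toLp 2 a‖ ^ 2 := by
  rw [sq3, dot3_eq_inner, real_inner_self_eq_norm_sq]

lemma pres_eq_soundC_mul {pfun : ℝ → ℝ → ℝ} {U : MHDState} (hU : U ∈ Gset) :
    pres pfun U = soundC pfun U * √(2 * intE U) * √(dens U) := by
  obtain ⟨hρ, hE⟩ := hU
  have he : √(2 * specE U) = √(2 * intE U) / √(dens U) := by
    rw [specE, ← Real.sqrt_div (by linarith), mul_div_assoc]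
  rw [soundC, he]
  field_simp
  rw [Real.sq_sqrt hρ.le]

lemma waveC_eq_sqrt_fastRoot (pfun : ℝ → ℝ → ℝ) {d : ℕ} (hd : d ≤ 3) (ξ : Fin d → ℝ)
    (U : MHDState) :
    waveC pfun hd ξ U = √(fastRoot (soundC pfun U ^ 2) (sq3 (magB U) / dens U)
      (dirDot hd ξ (magB U) ^ 2 / dens U)) := by
  rw [waveC, fastRoot, mul_div_assoc]

lemma theta_vel_sq_sum {U : MHDState} (hU : U ∈ Gset) (vs Bs : Fin 3 → ℝ) :
    theta U vs Bs 3 ^ 2 + theta U vs Bs 4 ^ 2 + theta U vs Bs 5 ^ 2 + theta U vs Bs 6 ^ 2 =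
      dens U * sq3 (vel U - vs) / 2 + intE U := by
  have h2 : √2 ^ 2 = 2 := Real.sq_sqrt zero_le_two
  have hρ : √(dens U) ^ 2 = dens U := Real.sq_sqrt hU.1.le
  have hE : √(2 * intE U) ^ 2 = 2 * intE U := Real.sq_sqrt (by linarith [hU.2])
  simp only [theta, sq3, dot3, Fin.sum_univ_three, Matrix.cons_val, div_pow, mul_pow, h2, hρ, hE,
    Pi.sub_apply]
  ring

lemma thetaSq_eq {U : MHDState} (hU : U ∈ Gset) (vs Bs : Fin 3 → ℝ) :
    thetaSq U vs Bs = (sq3 (magB U - Bs) + dens U * sq3 (vel U - vs) + 2 * intE U) / 2 := by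
  have h2 : √2 ^ 2 = 2 := Real.sq_sqrt zero_le_two
  have hB : theta U vs Bs 0 ^ 2 + theta U vs Bs 1 ^ 2 + theta U vs Bs 2 ^ 2 =
      sq3 (magB U - Bs) / 2 := by
    simp only [theta, sq3, dot3, Fin.sum_univ_three, Matrix.cons_val, div_pow, h2, Pi.sub_apply]
    ring
  rw [thetaSq, Fin.sum_univ_seven]
  linear_combination hB + theta_vel_sq_sum hU vs Bs

lemma toten_eq {U : MHDState} (hρ : dens U ≠ 0) :
    toten U = intE U + (dens U * sq3 (vel U) + sq3 (magB U)) / 2 := by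
  have h : sq3 (mom U) / dens U = dens U * sq3 (vel U) := by
    simp only [sq3, dot3, vel, Fin.sum_univ_three]
    field_simp
  rw [intE, h]
  ring

lemma dot8_mk (ρ ρ' E E' : ℝ) (m m' B B' : Fin 3 → ℝ) :
    dot8 (mk ρ m B E) (mk ρ' m' B' E') = ρ * ρ' + dot3 m m' + dot3 B B' + E * E' := by
  simp only [dot8, mk, dot3, Fin.sum_univ_succ, Fin.sum_univ_zero, Matrix.cons_val_zero,
    Matrix.cons_val_succ, Fin.succ_zero_eq_one, Fin.succ_one_eq_two, add_zero]
  ring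

lemma dot8_flux_nstar (pfun : ℝ → ℝ → ℝ) {U : MHDState} (hρ : dens U ≠ 0) (vs Bs : Fin 3 → ℝ)
    (i : Fin 3) :
    dot8 (flux pfun i U) (nstar vs Bs) - magB U i * dot3 vs Bs =
      vel U i * (dens U * sq3 (vel U - vs) / 2 + intE U)
        + vs i * (sq3 (magB U) / 2 - dot3 (magB U) Bs)
        + ((vel U - vs) i * (pres pfun U + dot3 (magB U) (magB U - Bs))
          - magB U i * dot3 (magB U - Bs) (vel U - vs)) := by
  rw [flux, nstar, dot8_mk, toten_eq hρ, ptot]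
  fin_cases i <;>
    simp only [Fin.zero_eta, Fin.mk_one, Fin.reduceFinMk, Fin.isValue, sq3, dot3,
      Fin.sum_univ_three, mul_ite, mul_one, mul_zero, ↓reduceIte, one_ne_zero, zero_ne_one,
      Fin.reduceEq, Pi.sub_apply] <;>
    ring

lemma dot8_sum_smul {n : ℕ} (ξ : Fin n → ℝ) (F : Fin n → MHDState) (V : MHDState) :
    dot8 (∑ k, ξ k • F k) V = ∑ k, ξ k * dot8 (F k) V := by
  change dotProduct (∑ k, ξ k • F k) V = ∑ k, ξ k * dotProduct (F k) V
  simp only [sum_dotProduct, smul_dotProduct, smul_eq_mul]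

lemma dot8_sum_smul_flux_nstar (pfun : ℝ → ℝ → ℝ) {U : MHDState} (hρ : dens U ≠ 0)
    (ξ vs Bs : Fin 3 → ℝ) :
    dot8 (∑ k, ξ k • flux pfun k U) (nstar vs Bs) - dot3 ξ (magB U) * dot3 vs Bs =
      dot3 ξ (vel U) * (dens U * sq3 (vel U - vs) / 2 + intE U)
        + dot3 ξ vs * (sq3 (magB U) / 2 - dot3 (magB U) Bs)
        + (dot3 ξ (vel U - vs) * (pres pfun U + dot3 (magB U) (magB U - Bs))
          - dot3 ξ (magB U) * dot3 (magB U - Bs) (vel U - vs)) := by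
  have h := dot8_flux_nstar pfun hρ vs Bs
  rw [dot8_sum_smul]
  simp only [dot3, Fin.sum_univ_three] at h ⊢
  linear_combination ξ 0 * h 0 + ξ 1 * h 1 + ξ 2 * h 2

lemma cross_terms_le_sqrt_fastRoot_mul_thetaSq (pfun : ℝ → ℝ → ℝ) {U : MHDState} (hU : U ∈ Gset)
    {ξ : Fin 3 → ℝ} (hξ : sq3 ξ = 1) (vs Bs : Fin 3 → ℝ) :
    dot3 ξ (vel U - vs) * (pres pfun U + dot3 (magB U) (magB U - Bs))
        - dot3 ξ (magB U) * dot3 (magB U - Bs) (vel U - vs) ≤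
      √(fastRoot (soundC pfun U ^ 2) (sq3 (magB U) / dens U) (dot3 ξ (magB U) ^ 2 / dens U))
        * thetaSq U vs Bs := by
  rw [sq3_eq_norm_sq, pow_eq_one_iff_of_nonneg (norm_nonneg _) two_ne_zero] at hξ
  have h := inner_cross_le_sqrt_fastRoot_div hξ hU.1 (soundC pfun U) √(2 * intE U)
    (WithLp.toLp 2 (magB U)) (WithLp.toLp 2 (magB U - Bs)) (WithLp.toLp 2 (vel U - vs))
  rw [Real.sq_sqrt (by linarith [hU.2])] at h
  rw [thetaSq_eq hU, pres_eq_soundC_mul hU]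
  simp only [dot3_eq_inner, sq3_eq_norm_sq]
  exact h.trans_eq (by ring)

theorem dir_flux_estimate_general (pfun : ℝ → ℝ → ℝ)
    {d : ℕ} (hd : d ≤ 3) (ξ : Fin d → ℝ) (hξ : unitVec ξ)
    (U : MHDState) (hU : U ∈ Gset) (vs Bs : Fin 3 → ℝ) :
    dot8 (dirFlux pfun hd ξ U) (nstar vs Bs) - dirDot hd ξ (magB U) * dot3 vs Bs ≤
      dirDot hd ξ (vel U) * (theta U vs Bs 3 ^ 2 + theta U vs Bs 4 ^ 2
          + theta U vs Bs 5 ^ 2 + theta U vs Bs 6 ^ 2)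
        + dirDot hd ξ vs * (sq3 (magB U) / 2 - dot3 (magB U) Bs)
        + waveC pfun hd ξ U * thetaSq U vs Bs := by
  have hξ3 : sq3 (padDir hd ξ) = 1 := (sq3_padDir hd ξ).trans hξ
  rw [dirFlux_eq_sum_padDir, theta_vel_sq_sum hU, waveC_eq_sqrt_fastRoot]
  simp only [dirDot_eq_dot3_padDir]
  have hid := dot8_sum_smul_flux_nstar pfun hU.1.ne' (padDir hd ξ) vs Bs
  have hle := cross_terms_le_sqrt_fastRoot_mul_thetaSq pfun hU hξ3 vs Bs
  linarith

/-- Lemma 2.8 (directional flux estimate). -/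
theorem dir_flux_estimate (pfun : ℝ → ℝ → ℝ) (hEOS : IsEOS pfun)
    {d : ℕ} (hd1 : 1 ≤ d) (hd : d ≤ 3) (ξ : Fin d → ℝ) (hξ : unitVec ξ)
    (U : MHDState) (hU : U ∈ Gset) (vs Bs : Fin 3 → ℝ) :
    dot8 (dirFlux pfun hd ξ U) (nstar vs Bs) - dirDot hd ξ (magB U) * dot3 vs Bs ≤
      dirDot hd ξ (vel U) * (theta U vs Bs 3 ^ 2 + theta U vs Bs 4 ^ 2
          + theta U vs Bs 5 ^ 2 + theta U vs Bs 6 ^ 2)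
        + dirDot hd ξ vs * (sq3 (magB U) / 2 - dot3 (magB U) Bs)
        + waveC pfun hd ξ U * thetaSq U vs Bs :=
  dir_flux_estimate_general pfun hd ξ hξ U hU vs Bs

end MHD
end
end

section
/- Source-term identity and estimate: for every U ∈ 𝒢 and all v*, B* ∈ ℝ³, (i) S(U)·n* = (v − v*)·(B − B*) − v*·B*, and (ii) |√ρ·(v − v*)·(B − B*)| < U·n* + |B*|²/2. -/
noncomputable section

open Finset

namespace MHD

set_option maxHeartbeats 1600000 in
/-- Source-term identity and estimate:
`S(U)·n* = (v − v*)·(B − B*) − v*·B*` and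
`|√ρ (v − v*)·(B − B*)| < U·n* + |B*|²/2`. -/
theorem source_identity_and_estimate
    (U : MHDState) (hU : U ∈ Gset) (vs Bs : Fin 3 → ℝ) :
    dot8 (source U) (nstar vs Bs) =
        dot3 (vel U - vs) (magB U - Bs) - dot3 vs Bs ∧
      |Real.sqrt (dens U) * dot3 (vel U - vs) (magB U - Bs)| <
        dot8 U (nstar vs Bs) + sq3 Bs / 2 := by
  obtain ⟨hρ, hE⟩ := hU
  have hρ' : dens U ≠ 0 := ne_of_gt hρ
  have hm : ∀ k, mom U k = dens U * vel U k := fun k => by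
    simp [vel]; field_simp
  have hs : Real.sqrt (dens U) ^ 2 = dens U := Real.sq_sqrt hρ.le
  have hdot8 : ∀ V W : MHDState, dot8 V W = V 0 * W 0 + V 1 * W 1 + V 2 * W 2
      + V 3 * W 3 + V 4 * W 4 + V 5 * W 5 + V 6 * W 6 + V 7 * W 7 := fun V W => by
    simp [dot8, Fin.sum_univ_eight]
  have hdot3 : ∀ a b : Fin 3 → ℝ, dot3 a b = a 0 * b 0 + a 1 * b 1 + a 2 * b 2 :=
    fun a b => by simp [dot3, Fin.sum_univ_three]
  have n0 : nstar vs Bs 0 = sq3 vs / 2 := rfl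
  have n1 : nstar vs Bs 1 = -vs 0 := rfl
  have n2 : nstar vs Bs 2 = -vs 1 := rfl
  have n3 : nstar vs Bs 3 = -vs 2 := rfl
  have n4 : nstar vs Bs 4 = -Bs 0 := rfl
  have n5 : nstar vs Bs 5 = -Bs 1 := rfl
  have n6 : nstar vs Bs 6 = -Bs 2 := rfl
  have n7 : nstar vs Bs 7 = 1 := rfl
  have s0 : source U 0 = 0 := rfl
  have s1 : source U 1 = magB U 0 := rfl
  have s2 : source U 2 = magB U 1 := rfl
  have s3 : source U 3 = magB U 2 := rfl
  have s4 : source U 4 = vel U 0 := rfl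
  have s5 : source U 5 = vel U 1 := rfl
  have s6 : source U 6 = vel U 2 := rfl
  have s7 : source U 7 = dot3 (vel U) (magB U) := rfl
  have u0 : U 0 = dens U := rfl
  have u1 : U 1 = dens U * vel U 0 := hm 0
  have u2 : U 2 = dens U * vel U 1 := hm 1
  have u3 : U 3 = dens U * vel U 2 := hm 2
  have u4 : U 4 = magB U 0 := rfl
  have u5 : U 5 = magB U 1 := rfl
  have u6 : U 6 = magB U 2 := rfl
  have u7 : U 7 = toten U := rfl
  have hsqm : sq3 (mom U) / dens U =
      dens U * (vel U 0 * vel U 0 + vel U 1 * vel U 1 + vel U 2 * vel U 2) := by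
    rw [sq3, hdot3, hm 0, hm 1, hm 2]
    field_simp
  have hEeq : toten U = intE U
      + (dens U * (vel U 0 * vel U 0 + vel U 1 * vel U 1 + vel U 2 * vel U 2)
        + sq3 (magB U)) / 2 := by
    rw [intE, ← hsqm]; ring
  constructor
  · rw [hdot8, s0, s1, s2, s3, s4, s5, s6, s7, n0, n1, n2, n3, n4, n5, n6, n7,
      hdot3 (vel U) (magB U), hdot3 (vel U - vs), hdot3 vs Bs]
    simp only [Pi.sub_apply]
    ring
  · have key : dot8 U (nstar vs Bs) + sq3 Bs / 2 =
        intE U + (dens U * ((vel U 0 - vs 0) ^ 2 + (vel U 1 - vs 1) ^ 2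
            + (vel U 2 - vs 2) ^ 2)
          + ((magB U 0 - Bs 0) ^ 2 + (magB U 1 - Bs 1) ^ 2
            + (magB U 2 - Bs 2) ^ 2)) / 2 := by
      rw [hdot8, u0, u1, u2, u3, u4, u5, u6, u7, n0, n1, n2, n3, n4, n5, n6, n7,
        hEeq, sq3, sq3, sq3, hdot3, hdot3, hdot3]
      ring
    rw [key, hdot3]
    simp only [Pi.sub_apply]
    have main : ∀ a0 a1 a2 b0 b1 b2 q e : ℝ, 0 < e →
        |q * (a0 * b0 + a1 * b1 + a2 * b2)| <
          e + (q ^ 2 * (a0 ^ 2 + a1 ^ 2 + a2 ^ 2) + (b0 ^ 2 + b1 ^ 2 + b2 ^ 2)) / 2 := by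
      intro a0 a1 a2 b0 b1 b2 q e he
      rw [abs_lt]
      constructor
      · linarith [he, sq_nonneg (q * a0 + b0), sq_nonneg (q * a1 + b1),
          sq_nonneg (q * a2 + b2)]
      · linarith [he, sq_nonneg (q * a0 - b0), sq_nonneg (q * a1 - b1),
          sq_nonneg (q * a2 - b2)]
    have := main (vel U 0 - vs 0) (vel U 1 - vs 1) (vel U 2 - vs 2)
      (magB U 0 - Bs 0) (magB U 1 - Bs 1) (magB U 2 - Bs 2)
      (Real.sqrt (dens U)) (intE U) hE
    rw [hs] at this
    linarith [this]
end MHD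
end
end

section
/- Source-term lower bound: for every U ∈ 𝒢, all v*, B* ∈ ℝ³ and every b ∈ ℝ, one has −b·(S(U)·n*) ≥ b·(v*·B*) − (|b|/√ρ)·(U·n* + |B*|²/2). -/
noncomputable section

open Finset

namespace MHD

/-!
Write `w = v − v*` and `C = B − B*`. Then `−S(U)·n* = v*·B* − w·C` and
`U·n* + |B*|²/2 = 𝓔(U) + ρ|w|²/2 + |C|²/2`, so the claim follows from `𝓔(U) > 0` and the
weighted AM–GM inequality `2√ρ |w·C| ≤ ρ|w|² + |C|²`.
-/

theorem _root_.Matrix.mul_dotProduct_le {ι : Type*} [Fintype ι] (b : ℝ) {s : ℝ} (hs : 0 < s)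
    (a c : ι → ℝ) :
    b * (a ⬝ᵥ c) ≤ |b| / s * (s ^ 2 * (a ⬝ᵥ a) / 2 + (c ⬝ᵥ c) / 2) := by
  have hsq (v : ι → ℝ) : 0 ≤ v ⬝ᵥ v := Finset.sum_nonneg fun i _ => mul_self_nonneg (v i)
  have hexpand (ε : ℝ) : (s • a + ε • c) ⬝ᵥ (s • a + ε • c)
      = s ^ 2 * (a ⬝ᵥ a) + 2 * (s * ε) * (a ⬝ᵥ c) + ε ^ 2 * (c ⬝ᵥ c) := by
    simp only [add_dotProduct, dotProduct_add, smul_dotProduct, dotProduct_smul, smul_eq_mul,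
      dotProduct_comm c a]
    ring
  have hAMGM : 2 * s * |a ⬝ᵥ c| ≤ s ^ 2 * (a ⬝ᵥ a) + c ⬝ᵥ c := by
    have hplus := hexpand 1
    have hminus := hexpand (-1)
    rcases abs_cases (a ⬝ᵥ c) with ⟨h, -⟩ | ⟨h, -⟩ <;> rw [h] <;>
      nlinarith [hsq (s • a + (1 : ℝ) • c), hsq (s • a + (-1 : ℝ) • c)]
  rw [div_mul_eq_mul_div, le_div_iff₀ hs]
  calc b * (a ⬝ᵥ c) * s ≤ |b| * |a ⬝ᵥ c| * s := by
        rw [← abs_mul]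
        exact mul_le_mul_of_nonneg_right (le_abs_self _) hs.le
    _ ≤ |b| * (s ^ 2 * (a ⬝ᵥ a) / 2 + (c ⬝ᵥ c) / 2) := by
        nlinarith [mul_le_mul_of_nonneg_left hAMGM (abs_nonneg b)]

theorem dot8_source_nstar (U : MHDState) (vs Bs : Fin 3 → ℝ) :
    dot8 (source U) (nstar vs Bs) = dot3 (vel U - vs) (magB U - Bs) - dot3 vs Bs := by
  simp only [dot8, source, nstar, mk, dot3, Fin.sum_univ_eight, Fin.sum_univ_three,
    Pi.sub_apply, Matrix.cons_val]
  ring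

theorem dot8_nstar_add_sq3 {U : MHDState} (hU : dens U ≠ 0) (vs Bs : Fin 3 → ℝ) :
    dot8 U (nstar vs Bs) + sq3 Bs / 2
      = intE U + dens U * sq3 (vel U - vs) / 2 + sq3 (magB U - Bs) / 2 := by
  simp only [dens] at hU
  simp only [dot8, nstar, mk, intE, toten, vel, mom, magB, dens, sq3, dot3, Fin.sum_univ_eight,
    Fin.sum_univ_three, Pi.sub_apply, Matrix.cons_val]
  field_simp
  ring

/-- Source-term lower bound:
`−b (S(U)·n*) ≥ b (v*·B*) − (|b|/√ρ)(U·n* + |B*|²/2)`. -/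
theorem source_lower_bound
    (U : MHDState) (hU : U ∈ Gset) (vs Bs : Fin 3 → ℝ) (b : ℝ) :
    -(b * dot8 (source U) (nstar vs Bs)) ≥
      b * dot3 vs Bs -
        |b| / Real.sqrt (dens U) * (dot8 U (nstar vs Bs) + sq3 Bs / 2) := by
  obtain ⟨hρ, hE⟩ := hU
  have hs : 0 < Real.sqrt (dens U) := Real.sqrt_pos.mpr hρ
  have hcross : b * dot3 (vel U - vs) (magB U - Bs) ≤ |b| / Real.sqrt (dens U) *
      (Real.sqrt (dens U) ^ 2 * sq3 (vel U - vs) / 2 + sq3 (magB U - Bs) / 2) :=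
    Matrix.mul_dotProduct_le b hs _ _
  have hint : 0 ≤ |b| / Real.sqrt (dens U) * intE U := by positivity
  rw [Real.sq_sqrt hρ.le] at hcross
  rw [dot8_nstar_add_sq3 hρ.ne', dot8_source_nstar]
  linarith

end MHD
end
end
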